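/- Let u be a string of length n with period set P and irreducible period set R(P) = {0 = a_0 < a_1 < ... < a_k}. Then for every 0 ≤ i ≤ k there exists q_i ∈ {1,...,n - a_i} such that (1) q_i ≤ n / 2^i, and (2) either a_i + q_i = n or a_i + q_i lies in the forward closure FC_n({a_0,...,a_i}). -/

import Mathlib

def IsPeriod {α : Type*} (n : ℕ) (u : Fin n → α) (p : ℕ) : Prop :=
  p < n ∧ ∀ (i : ℕ) (h : i + p < n),
    u ⟨i, Nat.lt_of_le_of_lt (Nat.le_add_right i p) h⟩ = u ⟨i + p, h⟩

/-- Generators of the forward closure: smallest superset of `S` closed under the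
forward propagation rule. -/
inductive FCgen (n : ℕ) (S : Set ℕ) : ℕ → Prop
  | base {p : ℕ} : p ∈ S → FCgen n S p
  | step {p q k : ℕ} : FCgen n S p → FCgen n S q → p ≤ q →
      p + k * (q - p) < n → FCgen n S (p + k * (q - p))

/-- The forward closure of a set `S ⊆ {0,…,n-1}`. -/
def FC (n : ℕ) (S : Set ℕ) : Set ℕ := {m | FCgen n S m}

/-- The period set of a string. -/
def PeriodSet {α : Type*} (n : ℕ) (u : Fin n → α) : Set ℕ := {p | IsPeriod n u p}

/-- `R` is the irreducible period set of `P`: a minimal subset of `P` whose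
forward closure is `P`. -/
def IsIrred (n : ℕ) (P R : Set ℕ) : Prop :=
  R ⊆ P ∧ FC n R = P ∧ ∀ R' ⊆ R, FC n R' = P → R' = R

/-!
Induction along `a₀ < a₁ < ⋯`. By minimality of `R(P)`, `aᵢ₊₁` is not generated by
`a₀, …, aᵢ`, so it is not a term of the progression `aᵢ + ℕ qᵢ` inside `FC_n`; it falls
strictly between two consecutive terms `m < aᵢ₊₁ < c` (with `c ≤ n`), and the shorter of
the two gaps is a valid `qᵢ₊₁ ≤ qᵢ / 2`.
-/

open Set

section ForwardClosure

variable {n : ℕ} {S T : Set ℕ}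

theorem subset_FC : S ⊆ FC n S := fun _ => FCgen.base

theorem FC_subset_of_subset_FC (h : S ⊆ FC n T) : FC n S ⊆ FC n T := by
  intro x hx
  induction hx with
  | base hp => exact h hp
  | step _ _ hle hlt ih₁ ih₂ => exact FCgen.step ih₁ ih₂ hle hlt

theorem FC_mono (h : S ⊆ T) : FC n S ⊆ FC n T :=
  FC_subset_of_subset_FC (h.trans subset_FC)

/-- Here `a + q = n` is allowed: the only term of the progression below `n` is then `a`. -/
theorem add_mul_mem_FC {a q k : ℕ} (ha : a ∈ FC n S) (hq : a + q = n ∨ a + q ∈ FC n S)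
    (hk : a + k * q < n) : a + k * q ∈ FC n S := by
  rcases hq with hq | hq
  · obtain rfl : k = 0 := by
      have : k * q < 1 * q := by omega
      exact Nat.lt_one_iff.1 (Nat.lt_of_mul_lt_mul_right this)
    simpa using ha
  · have := FCgen.step (k := k) ha hq (Nat.le_add_right a q) (by rwa [Nat.add_sub_cancel_left])
    rwa [Nat.add_sub_cancel_left] at this

/-- With `m ≤ p < m + q` the term of `a + ℕ q` just below `p` and `c = min n (m + q)`,
the witness is the shorter gap `min (p - m) (c - p)`: from `p` it reaches either
`2p - m`, generated by `m` and `p`, or `c`. -/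
theorem exists_half_step {a q p : ℕ} (hST : S ⊆ T) (ha : a ∈ FC n S) (hq : 0 < q)
    (haq : a + q = n ∨ a + q ∈ FC n S) (hp : p ∈ FC n T) (hpS : p ∉ FC n S)
    (hap : a ≤ p) (hpn : p < n) :
    ∃ q', 0 < q' ∧ q' ≤ n - p ∧ 2 * q' ≤ q ∧ (p + q' = n ∨ p + q' ∈ FC n T) := by
  have hdiv := Nat.div_add_mod' (p - a) q
  have hmod := Nat.mod_lt (p - a) hq
  set m := a + (p - a) / q * q with hm
  have hmS : m ∈ FC n S := add_mul_mem_FC ha haq (by omega)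
  have hmp : m < p := lt_of_le_of_ne (by omega) fun h => hpS (h ▸ hmS)
  have hcS : min n (m + q) = n ∨ min n (m + q) ∈ FC n S := by
    by_cases hmq : m + q < n
    · have hnext : m + q = a + ((p - a) / q + 1) * q := by rw [hm, add_one_mul, add_assoc]
      right
      rw [min_eq_right hmq.le, hnext]
      exact add_mul_mem_FC ha haq (by omega)
    · exact Or.inl (min_eq_left (by omega))
  set c := min n (m + q)
  refine ⟨min (p - m) (c - p), by omega, by omega, by omega, ?_⟩
  rcases le_total (p - m) (c - p) with h | h
  · rw [min_eq_left h]
    by_cases hlt : m + 2 * (p - m) < n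
    · have hstep := FCgen.step (FC_mono hST hmS) hp hmp.le hlt
      rw [show m + 2 * (p - m) = p + (p - m) by omega] at hstep
      exact Or.inr hstep
    · exact Or.inl (by omega)
  · rw [min_eq_right h, Nat.add_sub_cancel' (by omega)]
    exact hcS.imp_right (FC_mono hST ·)

end ForwardClosure

theorem IsIrred.notMem_FC_diff_singleton {n : ℕ} {P R : Set ℕ} (hR : IsIrred n P R)
    {r : ℕ} (hr : r ∈ R) : r ∉ FC n (R \ {r}) := by
  intro h
  have hsub : R ⊆ FC n (R \ {r}) := fun x hx =>
    if hxr : x = r then hxr ▸ h else FCgen.base ⟨hx, hxr⟩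
  have hFC : FC n (R \ {r}) = P :=
    hR.2.1 ▸ (FC_mono sdiff_subset).antisymm (FC_subset_of_subset_FC hsub)
  have hr' : r ∈ R \ {r} := (hR.2.2 _ sdiff_subset hFC).symm ▸ hr
  exact hr'.2 rfl

theorem IsIrred.exists_two_pow_mul_le {n k : ℕ} {P : Set ℕ} {a : Fin (k + 1) → ℕ}
    (ha : StrictMono a) (han : ∀ j, a j < n) (hirr : IsIrred n P (range a))
    (i : Fin (k + 1)) :
    ∃ q, 0 < q ∧ q ≤ n - a i ∧ 2 ^ (i : ℕ) * q ≤ n ∧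
      (a i + q = n ∨ a i + q ∈ FC n (a '' Iic i)) := by
  induction i using Fin.induction with
  | zero =>
    have := han 0
    exact ⟨n - a 0, by omega, le_rfl, by simp, Or.inl (by omega)⟩
  | succ i ih =>
    obtain ⟨q, hq, -, hqn, haq⟩ := ih
    have hprefix : a '' Iic i.castSucc ⊆ range a \ {a i.succ} := by
      rintro _ ⟨j, hj, rfl⟩
      exact ⟨mem_range_self j, (ha.injective.ne (hj.trans_lt i.castSucc_lt_succ).ne :)⟩
    have hnot : a i.succ ∉ FC n (a '' Iic i.castSucc) := fun h =>
      hirr.notMem_FC_diff_singleton (mem_range_self _) (FC_mono hprefix h)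
    obtain ⟨q', hq', hq'a, hq'q, hq'mem⟩ := exists_half_step
      (image_mono (Iic_subset_Iic.2 i.castSucc_lt_succ.le))
      (subset_FC ⟨_, mem_Iic.2 le_rfl, rfl⟩) hq haq
      (subset_FC ⟨_, mem_Iic.2 le_rfl, rfl⟩) hnot
      (ha i.castSucc_lt_succ).le (han _)
    refine ⟨q', hq', hq'a, ?_, hq'mem⟩
    calc 2 ^ (i.succ : ℕ) * q' = 2 ^ (i.castSucc : ℕ) * (2 * q') := by simp [pow_succ]; ring
      _ ≤ 2 ^ (i.castSucc : ℕ) * q := Nat.mul_le_mul_left _ hq'q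
      _ ≤ n := hqn

theorem exists_qi {α : Type*} {n k : ℕ} (u : Fin n → α) (a : Fin (k + 1) → ℕ)
    (ha : StrictMono a)
    (hirr : IsIrred n (PeriodSet n u) (Set.range a)) :
    ∀ i : Fin (k + 1), ∃ q : ℕ, 1 ≤ q ∧ q ≤ n - a i ∧
      (q : ℝ) ≤ (n : ℝ) / 2 ^ (i : ℕ) ∧
      (a i + q = n ∨
        a i + q ∈ FC n (Set.range fun j : Fin ((i : ℕ) + 1) => a ⟨j, by omega⟩)) := by
  intro i
  obtain ⟨q, hq, hqa, hqn, hmem⟩ :=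
    hirr.exists_two_pow_mul_le ha (fun j => (hirr.1 (mem_range_self j)).1) i
  have hprefix : (range fun j : Fin ((i : ℕ) + 1) => a ⟨j, by omega⟩) = a '' Iic i := by
    ext x
    constructor
    · rintro ⟨j, rfl⟩
      exact ⟨_, Fin.mk_le_mk.2 (Nat.lt_succ_iff.1 j.2), rfl⟩
    · rintro ⟨j, hj, rfl⟩
      exact ⟨⟨j, Nat.lt_succ_iff.2 hj⟩, rfl⟩
  refine ⟨q, hq, hqa, ?_, hprefix ▸ hmem⟩
  rw [le_div_iff₀ (by positivity)]
  exact_mod_cast (mul_comm q _).trans_le hqn
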